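/- arXiv:2104.05912 — 2 statements merged into one kernel-verified Lean document; each statement's English description precedes it below -/
import Mathlib

section
/- Let P: U × Res_{E/Q_p}G_m → GU be the multiplication map (u, z) ↦ uz for an odd unitary similitude group GU over Q_p, which is surjective on Q_p-points with kernel U(1). For (γ, z) ∈ (U × Res_{E/Q_p}G_m)(Q_p), the map P induces a bijection between conjugacy classes in (U × Res G_m)(Q_p) that are stably conjugate to (γ, z) and conjugacy classes in GU(Q_p) that are stably conjugate to γz. -/
/-!
Since `Z` is central and `GU = U · Z`, conjugating by `u z` is the same as conjugating by `u`, so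
`U`-conjugacy of `u` and `u'` is the same as `GU`-conjugacy of `u z` and `u' z`, over `ℚ_p` as
over the algebraic closure. Stably conjugate elements have the same similitude factor, so an
element stably conjugate to `γ z` differs from `z` by an element of `U`; and on `U × Z` stable
conjugacy to `(γ, z)` pins the `Z`-component to `z`.
-/

theorem Prod.isConj_iff {G H : Type*} [Group G] [Group H] {a a' : G} {b b' : H} :
    IsConj (a, b) (a', b') ↔ IsConj a a' ∧ IsConj b b' := by
  refine ⟨fun h => ⟨(MonoidHom.fst G H).map_isConj h, (MonoidHom.snd G H).map_isConj h⟩, ?_⟩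
  rintro ⟨ha, hb⟩
  obtain ⟨x, rfl⟩ := _root_.isConj_iff.mp ha
  obtain ⟨y, rfl⟩ := _root_.isConj_iff.mp hb
  exact _root_.isConj_iff.mpr ⟨(x, y), rfl⟩

theorem Prod.isConj_iff_of_commGroup {G N : Type*} [Group G] [CommGroup N] {a a' : G}
    {b b' : N} : IsConj (a, b) (a', b') ↔ IsConj a a' ∧ b = b' := by
  rw [Prod.isConj_iff, isConj_iff_eq]

section CentralElement

variable {G : Type*} [Group G] {d : G}

theorem conj_mul_of_commute (hd : ∀ x, Commute d x) (x a : G) :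
    x * (a * d) * x⁻¹ = x * a * x⁻¹ * d := by
  calc x * (a * d) * x⁻¹ = x * a * (d * x⁻¹) := by group
    _ = x * a * x⁻¹ * d := by rw [(hd x⁻¹).eq]; group

theorem conj_by_mul_of_commute (hd : ∀ x, Commute d x) (x a : G) :
    x * d * a * (x * d)⁻¹ = x * a * x⁻¹ := by
  calc x * d * a * (x * d)⁻¹ = x * (d * a) * d⁻¹ * x⁻¹ := by group
    _ = x * a * x⁻¹ := by rw [(hd a).eq]; group

theorem isConj_mul_right_iff_of_commute {a b : G} (hd : ∀ x, Commute d x) :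
    IsConj (a * d) (b * d) ↔ IsConj a b := by
  simp only [isConj_iff, conj_mul_of_commute hd, mul_left_inj]

end CentralElement

theorem exists_eq_mul_of_map_eq {K G A : Type*} [Group K] [Group G] [Group A]
    {i : K →* G} {c : G →* A} (hker : ∀ g, c g = 1 → ∃ u, i u = g) {g k : G}
    (h : c g = c k) : ∃ u, g = i u * k := by
  obtain ⟨u, hu⟩ := hker (g * k⁻¹) (by rw [map_mul, map_inv, h, mul_inv_cancel])
  exact ⟨u, by rw [hu, inv_mul_cancel_right]⟩

theorem isConj_of_isConj_map_of_forall_eq_mul_central {H Z G : Type*} [Group H] [Monoid Z]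
    [Group G] {f : H →* G} {eZ : Z →* G} (hf : Function.Injective f)
    (hZ : ∀ z x, Commute (eZ z) x) (hgen : ∀ g, ∃ h z, g = f h * eZ z) {a b : H}
    (hab : IsConj (f a) (f b)) : IsConj a b := by
  obtain ⟨x, hx⟩ := isConj_iff.mp hab
  obtain ⟨h, z, rfl⟩ := hgen x
  rw [conj_by_mul_of_commute (hZ z)] at hx
  exact isConj_iff.mpr ⟨h, hf (by rwa [map_mul, map_mul, map_inv])⟩

theorem stable_classes_bijection_U_times_Gm_to_GU_general
    (U Z GU Ub Zb GUb A Ab : Type*)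
    [Group U] [CommGroup Z] [Group GU] [Group Ub] [CommGroup Zb] [Group GUb]
    [CommGroup A] [CommGroup Ab]
    (eU : U →* GU) (eZ : Z →* GU)
    (eUb : Ub →* GUb) (eZb : Zb →* GUb)
    (heU : Function.Injective eU) (heUb : Function.Injective eUb)
    (hZcent : ∀ (z : Z) (g : GU), eZ z * g = g * eZ z)
    (hZbcent : ∀ (z : Zb) (g : GUb), eZb z * g = g * eZb z)
    (ιU : U →* Ub) (ιZ : Z →* Zb) (ιG : GU →* GUb)
    (hιZ : Function.Injective ιZ)
    (hcompU : ∀ u, ιG (eU u) = eUb (ιU u))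
    (hcompZ : ∀ z, ιG (eZ z) = eZb (ιZ z))
    (c : GU →* A) (cb : GUb →* Ab) (ιA : A →* Ab)
    (hιA : Function.Injective ιA)
    (hccompat : ∀ g, cb (ιG g) = ιA (c g))
    (hkerU : ∀ g : GU, c g = 1 → ∃ u, eU u = g)
    (hcU : ∀ u, c (eU u) = 1)
    (hsurj : ∀ g : GU, ∃ u z, g = eU u * eZ z)
    (hsurjb : ∀ g : GUb, ∃ u z, g = eUb u * eZb z)
    (γ : U) (z : Z) :
    (∀ q : U × Z,
        IsConj ((ιU q.1, ιZ q.2) : Ub × Zb) (ιU γ, ιZ z) →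
        IsConj (ιG (eU q.1 * eZ q.2)) (ιG (eU γ * eZ z))) ∧
    (∀ g : GU, IsConj (ιG g) (ιG (eU γ * eZ z)) →
        ∃ q : U × Z, IsConj ((ιU q.1, ιZ q.2) : Ub × Zb) (ιU γ, ιZ z) ∧
          IsConj (eU q.1 * eZ q.2) g) ∧
    (∀ q q' : U × Z,
        IsConj ((ιU q.1, ιZ q.2) : Ub × Zb) (ιU γ, ιZ z) →
        IsConj ((ιU q'.1, ιZ q'.2) : Ub × Zb) (ιU γ, ιZ z) →
        IsConj (eU q.1 * eZ q.2) (eU q'.1 * eZ q'.2) →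
        IsConj q q') := by
  refine ⟨?_, ?_, ?_⟩
  · rintro ⟨u, w⟩ hq
    obtain ⟨hu, rfl⟩ : IsConj (ιU u) (ιU γ) ∧ w = z := by
      rwa [Prod.isConj_iff_of_commGroup, hιZ.eq_iff] at hq
    simp only [map_mul, hcompU, hcompZ]
    exact (isConj_mul_right_iff_of_commute (hZbcent _)).mpr (eUb.map_isConj hu)
  · intro g hg
    have hsim : c g = c (eU γ * eZ z) :=
      hιA (by rw [← hccompat, ← hccompat]; exact isConj_iff_eq.mp (cb.map_isConj hg))
    rw [map_mul, hcU, one_mul] at hsim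
    obtain ⟨u, rfl⟩ := exists_eq_mul_of_map_eq hkerU hsim
    refine ⟨(u, z), Prod.isConj_iff_of_commGroup.mpr ⟨?_, rfl⟩, IsConj.refl _⟩
    simp only [map_mul, hcompU, hcompZ] at hg
    exact isConj_of_isConj_map_of_forall_eq_mul_central heUb hZbcent hsurjb
      ((isConj_mul_right_iff_of_commute (hZbcent _)).mp hg)
  · rintro ⟨u, w⟩ ⟨u', w'⟩ hq hq' hconj
    obtain rfl : w = z := hιZ (Prod.isConj_iff_of_commGroup.mp hq).2
    obtain rfl : w' = w := hιZ (Prod.isConj_iff_of_commGroup.mp hq').2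
    refine Prod.isConj_iff_of_commGroup.mpr ⟨?_, rfl⟩
    exact isConj_of_isConj_map_of_forall_eq_mul_central heU hZcent hsurj
      ((isConj_mul_right_iff_of_commute (hZcent _)).mp hconj)

/-- Let `P : U × Res_{E/ℚ_p}𝔾_m → GU`, `(u,z) ↦ uz`, for an odd
unitary similitude group; it is surjective on points, `Z = Res 𝔾_m` is central,
`U` is the kernel of the similitude character `c`, and everything admits
compatible "points over the algebraic closure" (the groups `Ub, Zb, GUb` with
stable conjugacy meaning conjugacy of images there).  Then `P` induces a
bijection between conjugacy classes in `(U × Z)(ℚ_p)` stably conjugate to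
`(γ, z)` and conjugacy classes in `GU(ℚ_p)` stably conjugate to `γz`:
(1) `P` sends stable classes to stable classes; (2) every class stably conjugate
to `P(γ,z)` is hit; (3) `P` is injective on such conjugacy classes. -/
theorem stable_classes_bijection_U_times_Gm_to_GU
    (U Z GU Ub Zb GUb A Ab : Type*)
    [Group U] [CommGroup Z] [Group GU] [Group Ub] [CommGroup Zb] [Group GUb]
    [CommGroup A] [CommGroup Ab]
    (eU : U →* GU) (eZ : Z →* GU)
    (eUb : Ub →* GUb) (eZb : Zb →* GUb)
    (heU : Function.Injective eU) (heUb : Function.Injective eUb)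
    (hZcent : ∀ (z : Z) (g : GU), eZ z * g = g * eZ z)
    (hZbcent : ∀ (z : Zb) (g : GUb), eZb z * g = g * eZb z)
    (ιU : U →* Ub) (ιZ : Z →* Zb) (ιG : GU →* GUb)
    (hιZ : Function.Injective ιZ) (hιG : Function.Injective ιG)
    (hcompU : ∀ u, ιG (eU u) = eUb (ιU u))
    (hcompZ : ∀ z, ιG (eZ z) = eZb (ιZ z))
    (c : GU →* A) (cb : GUb →* Ab) (ιA : A →* Ab)
    (hιA : Function.Injective ιA)
    (hccompat : ∀ g, cb (ιG g) = ιA (c g))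
    (hkerU : ∀ g : GU, c g = 1 → ∃ u, eU u = g)
    (hcU : ∀ u, c (eU u) = 1)
    (hkerUb : ∀ g : GUb, cb g = 1 → ∃ u, eUb u = g)
    (hcUb : ∀ u, cb (eUb u) = 1)
    (hsurj : ∀ g : GU, ∃ u z, g = eU u * eZ z)
    (hsurjb : ∀ g : GUb, ∃ u z, g = eUb u * eZb z)
    (γ : U) (z : Z) :
    (∀ q : U × Z,
        IsConj ((ιU q.1, ιZ q.2) : Ub × Zb) (ιU γ, ιZ z) →
        IsConj (ιG (eU q.1 * eZ q.2)) (ιG (eU γ * eZ z))) ∧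
    (∀ g : GU, IsConj (ιG g) (ιG (eU γ * eZ z)) →
        ∃ q : U × Z, IsConj ((ιU q.1, ιZ q.2) : Ub × Zb) (ιU γ, ιZ z) ∧
          IsConj (eU q.1 * eZ q.2) g) ∧
    (∀ q q' : U × Z,
        IsConj ((ιU q.1, ιZ q.2) : Ub × Zb) (ιU γ, ιZ z) →
        IsConj ((ιU q'.1, ιZ q'.2) : Ub × Zb) (ιU γ, ιZ z) →
        IsConj (eU q.1 * eZ q.2) (eU q'.1 * eZ q'.2) →
        IsConj q q') :=
  stable_classes_bijection_U_times_Gm_to_GU_general U Z GU Ub Zb GUb A Ab eU eZ eUb eZb heU heUb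
    hZcent hZbcent ιU ιZ ιG hιZ hcompU hcompZ c cb ιA hιA hccompat hkerU hcU hsurj hsurjb γ z
end

section
/- Let (GU, b, μ) be a basic unramified PEL datum for an odd unitary similitude group over Q_p, and ψ a supercuspidal L-parameter of GU. Assuming (a) the averaging formula Mant_{GU,b,μ}(Σ_{π_{J_b}∈Π_ψ(J_b)} ⟨π_{J_b}, η(s)⟩ π_{J_b}) = Σ_ρ Σ_{π∈Π_ψ(GU)} ⟨π, η(s)⟩ (tr(η(s)|V_ρ)/dim ρ) [π][ρ ⊗ |·|^{−⟨ρ_{GU},μ⟩}] for every semisimple s ∈ S̄_ψ, and (b) that both sides depend only on the image of s in the finite group S̄_ψ, then for each fixed π_{J_b} ∈ Π_ψ(J_b): Mant_{GU,b,μ}(π_{J_b}) = Σ_{π∈Π_ψ(GU)} [π][Hom_{S̄_ψ}(ι(π_{J_b}) ⊗ ι(π)^∨, r_{−μ}∘ψ) ⊗ |·|^{−⟨ρ_{GU},μ⟩}] in Groth(GU(Q_p) × W_{E_μ}). -/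
/-! Averaging the formula against `⟨π_{J_b}, s⟩⁻¹` over the finite group `S` isolates
`π_{J_b}` on the left, by orthogonality of the distinct characters of the packet. On the right
each `(π, ρ)`-coefficient becomes `|S|⁻¹ ∑ₛ χ(s)⁻¹ tr(s | V_ρ)` for the character
`χ = ⟨π_{J_b}, ·⟩ ⟨π, ·⟩⁻¹`, which is the trace of the averaging projector onto the invariants
of `V_ρ ⊗ χ⁻¹`, i.e. the dimension of the `χ`-isotypic part of `V_ρ`. -/

section Orthogonality

variable {G k : Type*} [Group G] [Fintype G] [Field k]

theorem sum_inv_mul_units_hom_eq_ite [DecidableEq (G →* kˣ)] (χ ψ : G →* kˣ) :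
    ∑ g : G, ((χ g)⁻¹ : k) * ψ g = if χ = ψ then (Fintype.card G : k) else 0 := by
  split_ifs with h
  · subst h
    simp
  · have hne : (Units.coeHom k).comp (χ⁻¹ * ψ) ≠ 1 := fun h1 =>
      h (inv_mul_eq_one.mp (MonoidHom.ext fun g => Units.ext (DFunLike.congr_fun h1 g)))
    simpa using sum_hom_units_eq_zero _ hne

theorem ite_eq_inv_card_smul_sum_units_hom {P : Type*} [DecidableEq P] {χ : P → (G →* kˣ)}
    (hχ : Function.Injective χ) (hG : (Fintype.card G : k) ≠ 0) (p : P) :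
    (fun x => if x = p then (1 : k) else 0) =
      (Fintype.card G : k)⁻¹ • ∑ g : G, ((χ p g)⁻¹ : k) • fun x => (χ x g : k) := by
  classical
  funext x
  simp only [Pi.smul_apply, Finset.sum_apply, smul_eq_mul, sum_inv_mul_units_hom_eq_ite,
    hχ.eq_iff, eq_comm (a := p)]
  split_ifs <;> simp [hG]

end Orthogonality

namespace Representation

variable {k G V : Type*} [Field k] [Group G] [AddCommGroup V] [Module k V]

def twist (ρ : Representation k G V) (χ : G →* kˣ) : Representation k G V where
  toFun g := (χ g : k) • ρ g
  map_one' := by simp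
  map_mul' g h := by simp only [map_mul, Units.val_mul, smul_mul_smul_comm]

theorem mem_invariants_twist_inv_iff (ρ : Representation k G V) (χ : G →* kˣ) (v : V) :
    v ∈ (ρ.twist χ⁻¹).invariants ↔ ∀ g, ρ g v = (χ g : k) • v := by
  refine forall_congr' fun g => ?_
  change ((χ g)⁻¹ : kˣ) • ρ g v = v ↔ ρ g v = χ g • v
  exact inv_smul_eq_iff

theorem finrank_invariants_eq_inv_card_mul_sum_trace [Fintype G] [FiniteDimensional k V]
    (ρ : Representation k G V) (hG : (Fintype.card G : k) ≠ 0) :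
    (Module.finrank k ρ.invariants : k) =
      (Fintype.card G : k)⁻¹ * ∑ g : G, LinearMap.trace k V (ρ g) := by
  let := invertibleOfNonzero hG
  rw [← (isProj_averageMap ρ).trace]
  simp [GroupAlgebra.average, map_sum]

theorem finrank_isotypic_eq_inv_card_mul_sum_trace [Fintype G] [FiniteDimensional k V]
    (ρ : Representation k G V) (χ : G →* kˣ) (hG : (Fintype.card G : k) ≠ 0)
    (W : Submodule k V) (hW : ∀ v, v ∈ W ↔ ∀ g, ρ g v = (χ g : k) • v) :
    (Module.finrank k W : k) =
      (Fintype.card G : k)⁻¹ * ∑ g : G, ((χ g)⁻¹ : k) * LinearMap.trace k V (ρ g) := by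
  have hWeq : W = (ρ.twist χ⁻¹).invariants :=
    Submodule.ext fun v => (hW v).trans (mem_invariants_twist_inv_iff ρ χ v).symm
  rw [hWeq, finrank_invariants_eq_inv_card_mul_sum_trace _ hG]
  simp [twist]

end Representation

/-- Grothendieck groups are modelled by coefficient functions on the bases `[π_{J_b}]` and
`[π] ⊠ [ρ ⊗ |·|^{−⟨ρ_GU, μ⟩}]`; `W` is `Hom_{S̄_ψ}(ι(π_{J_b}) ⊗ ι(π)^∨, V_ρ)` realised inside
`V_ρ`, and `dρ` is `dim ρ`. -/
theorem kottwitz_conjecture_from_averaging_general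
    (S : Type*) [CommGroup S] [Fintype S]
    (PJ PG Rho : Type*) [DecidableEq PJ]
    (chJ : PJ → (S →* ℂˣ)) (chG : PG → (S →* ℂˣ))
    (hinj : Function.Injective chJ)
    (Vρ : Rho → Type*) [∀ r, AddCommGroup (Vρ r)] [∀ r, Module ℂ (Vρ r)]
    [∀ r, FiniteDimensional ℂ (Vρ r)]
    (σV : ∀ r, Representation ℂ S (Vρ r))
    (dρ : Rho → ℕ)
    (Mant : (PJ → ℂ) →ₗ[ℂ] ((PG × Rho) → ℂ))
    (havg : ∀ s : S,
      Mant (fun x => ((chJ x s : ℂˣ) : ℂ)) =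
        fun q => ((chG q.1 s : ℂˣ) : ℂ) *
          (LinearMap.trace ℂ (Vρ q.2) (σV q.2 s) / (dρ q.2 : ℂ))) :
    ∀ (πJ : PJ) (q : PG × Rho) (W : Submodule ℂ (Vρ q.2)),
      (∀ v : Vρ q.2, v ∈ W ↔ ∀ s : S,
        σV q.2 s v = (((chJ πJ s : ℂˣ) : ℂ) * ((chG q.1 s : ℂˣ) : ℂ)⁻¹) • v) →
      Mant (fun x => if x = πJ then 1 else 0) q
        = (Module.finrank ℂ W : ℂ) / (dρ q.2 : ℂ) := by
  intro πJ q W hW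
  have hS : (Fintype.card S : ℂ) ≠ 0 := Nat.cast_ne_zero.mpr Fintype.card_ne_zero
  have hdim := (σV q.2).finrank_isotypic_eq_inv_card_mul_sum_trace (chJ πJ * (chG q.1)⁻¹) hS W
    (by simpa using hW)
  rw [hdim, ite_eq_inv_card_smul_sum_units_hom hinj hS πJ, map_smul, map_sum]
  simp only [map_smul, havg, Pi.smul_apply, Finset.sum_apply, smul_eq_mul, Finset.mul_sum,
    Finset.sum_div]
  refine Finset.sum_congr rfl fun s _ => ?_
  simp only [MonoidHom.mul_apply, MonoidHom.inv_apply, Units.val_mul, Units.val_inv_eq_inv_val,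
    mul_inv_rev, inv_inv]
  ring

/-- Kottwitz conjecture from the averaging formula: Let `S = S̄_ψ`
be the (finite abelian) component group of a supercuspidal parameter, `PJ, PG`
the `L`-packets on `J_b` and `GU` with their characters `chJ, chG` of `S`
(injective on the packet by the LLC), `Rho` the set of irreducible factors `ρ`
of `r_{−μ}∘ψ` with `S`-representations on the isotypic parts `Vρ` and
`dρ = dim ρ`.  Grothendieck groups are modelled by their coefficient functions
on the bases `[π_J]` resp. `[π]⊠[ρ ⊗ |·|^{−⟨ρ_GU,μ⟩}]`.  If the averaging
formula (a) holds for all `s` (and hence (b) both sides depend only on the image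
of `s` in `S̄_ψ`), then for each `π_{J_b}`:
`Mant(π_{J_b}) = Σ_π [π][Hom_{S̄_ψ}(ι(π_{J_b}) ⊗ ι(π)^∨, r_{−μ}∘ψ) ⊗ |·|]`,
i.e. the coefficient at `(π, ρ)` is `dim Hom_{S̄_ψ}(chJ(π_J)·chG(π)⁻¹, Vρ)/dim ρ`. -/
theorem kottwitz_conjecture_from_averaging
    (S : Type*) [CommGroup S] [Fintype S]
    (PJ PG Rho : Type*) [Fintype PJ] [Fintype PG] [DecidableEq PJ]
    (chJ : PJ → (S →* ℂˣ)) (chG : PG → (S →* ℂˣ))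
    (hinj : Function.Injective chJ)
    (Vρ : Rho → Type*) [∀ r, AddCommGroup (Vρ r)] [∀ r, Module ℂ (Vρ r)]
    [∀ r, FiniteDimensional ℂ (Vρ r)]
    (σV : ∀ r, Representation ℂ S (Vρ r))
    (dρ : Rho → ℕ) (hdρ : ∀ r, 0 < dρ r)
    (Mant : (PJ → ℂ) →ₗ[ℂ] ((PG × Rho) → ℂ))
    (havg : ∀ s : S,
      Mant (fun x => ((chJ x s : ℂˣ) : ℂ)) =
        fun q => ((chG q.1 s : ℂˣ) : ℂ) *
          (LinearMap.trace ℂ (Vρ q.2) (σV q.2 s) / (dρ q.2 : ℂ))) :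
    ∀ (πJ : PJ) (q : PG × Rho) (W : Submodule ℂ (Vρ q.2)),
      (∀ v : Vρ q.2, v ∈ W ↔ ∀ s : S,
        σV q.2 s v = (((chJ πJ s : ℂˣ) : ℂ) * ((chG q.1 s : ℂˣ) : ℂ)⁻¹) • v) →
      Mant (fun x => if x = πJ then 1 else 0) q
        = (Module.finrank ℂ W : ℂ) / (dρ q.2 : ℂ) :=
  kottwitz_conjecture_from_averaging_general S PJ PG Rho chJ chG hinj Vρ σV dρ Mant havg
end
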